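/- arXiv:2111.05488 — 3 statements merged into one kernel-verified Lean document; each statement's English description precedes it below -/
import Mathlib

section
/- Let ℋ = ℂ²⊗ℂ²⊗ℂ²⊗ℂ² and for x = Σ c_{i₁i₂i₃i₄} e_{i₁i₂i₃i₄} ∈ ℋ define H(x) = c₁₁₁₁c₀₀₀₀ − c₁₁₁₀c₀₀₀₁ − c₁₁₀₁c₀₀₁₀ + c₁₁₀₀c₀₀₁₁ − c₁₀₁₁c₀₁₀₀ + c₁₀₁₀c₀₁₀₁ + c₁₀₀₁c₀₁₁₀ − c₁₀₀₀c₀₁₁₁. Then H is invariant under the action of SL(2,ℂ)⁴: for every g ∈ SL(2,ℂ)⁴ and every x ∈ ℋ, H(g·x) = H(x). -/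
/-- The Hilbert space of four qubits, in coordinates with respect to the basis
`e_{i₁i₂i₃i₄} = e_{i₁} ⊗ e_{i₂} ⊗ e_{i₃} ⊗ e_{i₄}` of `ℂ² ⊗ ℂ² ⊗ ℂ² ⊗ ℂ²`. -/
abbrev H4 : Type := Fin 2 → Fin 2 → Fin 2 → Fin 2 → ℂ

abbrev SL2 := Matrix.SpecialLinearGroup (Fin 2) ℂ

/-- The group `SL(2,ℂ)⁴`. -/
abbrev G4 := SL2 × SL2 × SL2 × SL2

/-- The action of `SL(2,ℂ)⁴` on `ℂ² ⊗ ℂ² ⊗ ℂ² ⊗ ℂ²`, given in coordinates: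
it is the linear extension of `(A,B,C,D)·(v₁⊗v₂⊗v₃⊗v₄) = Av₁⊗Bv₂⊗Cv₃⊗Dv₄`. -/
noncomputable def act (g : G4) (x : H4) : H4 := fun i1 i2 i3 i4 =>
  ∑ j1 : Fin 2, ∑ j2 : Fin 2, ∑ j3 : Fin 2, ∑ j4 : Fin 2,
    g.1 i1 j1 * g.2.1 i2 j2 * g.2.2.1 i3 j3 * g.2.2.2 i4 j4 * x j1 j2 j3 j4

/-- The quadratic invariant `H`. -/
noncomputable def Hpoly (x : H4) : ℂ :=
  x 1 1 1 1 * x 0 0 0 0 - x 1 1 1 0 * x 0 0 0 1 - x 1 1 0 1 * x 0 0 1 0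
    + x 1 1 0 0 * x 0 0 1 1 - x 1 0 1 1 * x 0 1 0 0 + x 1 0 1 0 * x 0 1 0 1
    + x 1 0 0 1 * x 0 1 1 0 - x 1 0 0 0 * x 0 1 1 1

/-! Up to a factor `2`, `H` is the quadratic form of `ε ⊗ ε ⊗ ε ⊗ ε`, where `ε(u, v) = u₀v₁ - u₁v₀`
is the determinant form on `ℂ²`. Since `ε(Au, Av) = det A · ε(u, v)`, acting by a matrix on a single
tensor slot multiplies `H` by its determinant; the action of `(A, B, C, D)` is the composite of
the four single-slot actions, so it multiplies `H` by `det A · det B · det C · det D`, which is `1`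
on `SL(2,ℂ)⁴`. -/

open Matrix

noncomputable def tensorAct (A B C D : Matrix (Fin 2) (Fin 2) ℂ) (x : H4) : H4 :=
  fun i1 i2 i3 i4 => ∑ j1 : Fin 2, ∑ j2 : Fin 2, ∑ j3 : Fin 2, ∑ j4 : Fin 2,
    A i1 j1 * B i2 j2 * C i3 j3 * D i4 j4 * x j1 j2 j3 j4

theorem act_eq_tensorAct (g : G4) : act g = tensorAct g.1 g.2.1 g.2.2.1 g.2.2.2 := rfl

theorem tensorAct_mul (A A' B B' C C' D D' : Matrix (Fin 2) (Fin 2) ℂ) (x : H4) :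
    tensorAct (A * A') (B * B') (C * C') (D * D') x =
      tensorAct A B C D (tensorAct A' B' C' D' x) := by
  funext i1 i2 i3 i4
  simp only [tensorAct, mul_apply, Fin.sum_univ_two]
  ring

theorem tensorAct_eq_comp (A B C D : Matrix (Fin 2) (Fin 2) ℂ) (x : H4) :
    tensorAct A B C D x =
      tensorAct A 1 1 1 (tensorAct 1 B 1 1 (tensorAct 1 1 C 1 (tensorAct 1 1 1 D x))) := by
  simp only [← tensorAct_mul, mul_one, one_mul]

section SingleSlot

variable (A : Matrix (Fin 2) (Fin 2) ℂ) (x : H4)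

theorem Hpoly_tensorAct_slot1 : Hpoly (tensorAct A 1 1 1 x) = A.det * Hpoly x := by
  simp [Hpoly, tensorAct, Fin.sum_univ_two, one_apply, det_fin_two]
  ring

theorem Hpoly_tensorAct_slot2 : Hpoly (tensorAct 1 A 1 1 x) = A.det * Hpoly x := by
  simp [Hpoly, tensorAct, Fin.sum_univ_two, one_apply, det_fin_two]
  ring

theorem Hpoly_tensorAct_slot3 : Hpoly (tensorAct 1 1 A 1 x) = A.det * Hpoly x := by
  simp [Hpoly, tensorAct, Fin.sum_univ_two, one_apply, det_fin_two]
  ring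

theorem Hpoly_tensorAct_slot4 : Hpoly (tensorAct 1 1 1 A x) = A.det * Hpoly x := by
  simp [Hpoly, tensorAct, Fin.sum_univ_two, one_apply, det_fin_two]
  ring

end SingleSlot

theorem Hpoly_tensorAct (A B C D : Matrix (Fin 2) (Fin 2) ℂ) (x : H4) :
    Hpoly (tensorAct A B C D x) = A.det * B.det * C.det * D.det * Hpoly x := by
  rw [tensorAct_eq_comp, Hpoly_tensorAct_slot1, Hpoly_tensorAct_slot2, Hpoly_tensorAct_slot3,
    Hpoly_tensorAct_slot4]
  ring

/-- The polynomial `H` is invariant under `SL(2,ℂ)⁴`. -/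
theorem Hpoly_invariant (g : G4) (x : H4) : Hpoly (act g x) = Hpoly x := by
  obtain ⟨A, B, C, D⟩ := g
  rw [act_eq_tensorAct, Hpoly_tensorAct, A.det_coe, B.det_coe, C.det_coe, D.det_coe]
  ring
end

section
/- Let ℋ = ℂ²⊗ℂ²⊗ℂ²⊗ℂ². For x = Σ c_{i₁i₂i₃i₄} e_{i₁i₂i₃i₄} ∈ ℋ, let M(x) denote the 4×4 matrix whose rows are indexed by pairs (i₁,i₂) ∈ {0,1}², whose columns are indexed by pairs (i₃,i₄) ∈ {0,1}², and whose ((i₁,i₂),(i₃,i₄)) entry is c_{i₁i₂i₃i₄}, and define L(x) = det M(x). Then L is invariant under the action of SL(2,ℂ)⁴: for every g ∈ SL(2,ℂ)⁴ and every x ∈ ℋ, L(g·x) = L(x). -/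
/-- The `4 × 4` matrix `M(x)` with rows indexed by `(i₁,i₂)`, columns by `(i₃,i₄)`,
and entries `c_{i₁i₂i₃i₄}`. -/
def Mmat (x : H4) : Matrix (Fin 2 × Fin 2) (Fin 2 × Fin 2) ℂ :=
  Matrix.of fun p q => x p.1 p.2 q.1 q.2

/-- The degree-4 invariant `L(x) = det M(x)`. -/
noncomputable def Lpoly (x : H4) : ℂ := (Mmat x).det

open Matrix Kronecker

lemma Matrix.SpecialLinearGroup.det_kronecker {m n R : Type*} [Fintype m] [DecidableEq m]
    [Fintype n] [DecidableEq n] [CommRing R] (A : SpecialLinearGroup m R)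
    (B : SpecialLinearGroup n R) : ((A : Matrix m m R) ⊗ₖ (B : Matrix n n R)).det = 1 := by
  rw [Matrix.det_kronecker, A.det_coe, B.det_coe, one_pow, one_pow, one_mul]

lemma Mmat_act (g : G4) (x : H4) :
    Mmat (act g x) =
      ((g.1 : Matrix (Fin 2) (Fin 2) ℂ) ⊗ₖ (g.2.1 : Matrix (Fin 2) (Fin 2) ℂ)) * Mmat x *
        ((g.2.2.1 : Matrix (Fin 2) (Fin 2) ℂ) ⊗ₖ (g.2.2.2 : Matrix (Fin 2) (Fin 2) ℂ))ᵀ := by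
  ext ⟨i1, i2⟩ ⟨i3, i4⟩
  simp only [Mmat, act, of_apply, mul_apply, transpose_apply, kroneckerMap_apply,
    Fintype.sum_prod_type, Fin.sum_univ_two]
  ring

/-- The polynomial `L` is invariant under `SL(2,ℂ)⁴`. -/
theorem Lpoly_invariant (g : G4) (x : H4) : Lpoly (act g x) = Lpoly x := by
  rw [Lpoly, Lpoly, Mmat_act, det_mul, det_mul, det_transpose,
    g.1.det_kronecker g.2.1, g.2.2.1.det_kronecker g.2.2.2, one_mul, mul_one]
end

section
/- Let ℋ = ℂ²⊗ℂ²⊗ℂ²⊗ℂ² with the action of Ĝ = SL(2,ℂ)⁴. The stabiliser in Ĝ of the element e₁₁₀₀ = e₁⊗e₁⊗e₀⊗e₀ equals {(D(b⁻¹cd, a'), D(b, b'), D(c, c')ᵀ, D(d, d')ᵀ) : a', b', c', d' ∈ ℂ and b, c, d ∈ ℂ with b, c, d ≠ 0}, where D(u, v) = [[u,0],[v,u⁻¹]] and ᵀ denotes matrix transpose. -/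
/-- The basis vector `e_{i₁i₂i₃i₄}`. -/
def e (i1 i2 i3 i4 : Fin 2) : H4 := fun j1 j2 j3 j4 =>
  if j1 = i1 ∧ j2 = i2 ∧ j3 = i3 ∧ j4 = i4 then 1 else 0

/-- `D(u, v) = [[u,0],[v,u⁻¹]]` for `u` a nonzero complex number and `v ∈ ℂ`. -/
noncomputable def Dlow (u : ℂˣ) (v : ℂ) : SL2 :=
  ⟨!![(u : ℂ), 0; v, ((u⁻¹ : ℂˣ) : ℂ)], by simp [Matrix.det_fin_two_of]⟩

/-- `D(u, v)ᵀ`, the transpose of `D(u, v)`. -/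
noncomputable def DlowT (u : ℂˣ) (v : ℂ) : SL2 :=
  ⟨(Dlow u v).1.transpose, by rw [Matrix.det_transpose]; exact (Dlow u v).2⟩

/-! The vector `g · e₁₁₀₀` is the pure tensor of column `1` of `A`, column `1` of `B`, column `0`
of `C` and column `0` of `D`. A pure tensor equals `e₁₁₀₀` iff these four columns are multiples of
`e₁, e₁, e₀, e₀` whose coefficients multiply to `1`. So `A, B` are lower and `C, D` upper
triangular; `det = 1` then fixes the second diagonal entries, and the product condition says
`A₀₀ = B₁₁ C₀₀ D₀₀ = b⁻¹cd`. -/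

def tensor4 (a b c d : Fin 2 → ℂ) : H4 := fun j1 j2 j3 j4 => a j1 * b j2 * c j3 * d j4

lemma act_e (g : G4) (i1 i2 i3 i4 : Fin 2) :
    act g (e i1 i2 i3 i4) =
      tensor4 (fun j => g.1 j i1) (fun j => g.2.1 j i2) (fun j => g.2.2.1 j i3)
        (fun j => g.2.2.2 j i4) := by
  funext j1 j2 j3 j4
  simp [act, e, tensor4, ite_and]

lemma tensor4_eq_e_iff {a b c d : Fin 2 → ℂ} {i1 i2 i3 i4 : Fin 2} :
    tensor4 a b c d = e i1 i2 i3 i4 ↔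
      a i1 * b i2 * c i3 * d i4 = 1 ∧ (∀ j ≠ i1, a j = 0) ∧ (∀ j ≠ i2, b j = 0) ∧
        (∀ j ≠ i3, c j = 0) ∧ ∀ j ≠ i4, d j = 0 := by
  constructor
  · intro h
    have h' (j1 j2 j3 j4) : a j1 * b j2 * c j3 * d j4 = e i1 i2 i3 i4 j1 j2 j3 j4 :=
      congrFun (congrFun (congrFun (congrFun h j1) j2) j3) j4
    have hone : a i1 * b i2 * c i3 * d i4 = 1 := by simpa [e] using h' i1 i2 i3 i4
    refine ⟨hone, fun j hj => ?_, fun j hj => ?_, fun j hj => ?_, fun j hj => ?_⟩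
    · have hzero := h' j i2 i3 i4
      simp only [e, hj, false_and, if_false] at hzero
      linear_combination a i1 * hzero - a j * hone
    · have hzero := h' i1 j i3 i4
      simp only [e, hj, false_and, and_false, if_false] at hzero
      linear_combination b i2 * hzero - b j * hone
    · have hzero := h' i1 i2 j i4
      simp only [e, hj, false_and, and_false, if_false] at hzero
      linear_combination c i3 * hzero - c j * hone
    · have hzero := h' i1 i2 i3 j
      simp only [e, hj, and_false, if_false] at hzero
      linear_combination d i4 * hzero - d j * hone
  · rintro ⟨hone, ha, hb, hc, hd⟩
    funext j1 j2 j3 j4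
    simp only [tensor4, e]
    split_ifs with hj
    · obtain ⟨rfl, rfl, rfl, rfl⟩ := hj
      exact hone
    · simp only [not_and_or] at hj
      rcases hj with hj | hj | hj | hj
      · simp [ha _ hj]
      · simp [hb _ hj]
      · simp [hc _ hj]
      · simp [hd _ hj]

namespace Matrix.SpecialLinearGroup

variable {R : Type*} [CommRing R] {M : SpecialLinearGroup (Fin 2) R}

lemma apply_zero_zero_mul_apply_one_one_of_apply_zero_one (h : M 0 1 = 0) :
    M 0 0 * M 1 1 = 1 := by
  have hdet := M.det_coe
  rwa [Matrix.det_fin_two, h, zero_mul, sub_zero] at hdet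

lemma apply_zero_zero_mul_apply_one_one_of_apply_one_zero (h : M 1 0 = 0) :
    M 0 0 * M 1 1 = 1 := by
  have hdet := M.det_coe
  rwa [Matrix.det_fin_two, h, mul_zero, sub_zero] at hdet

end Matrix.SpecialLinearGroup

open Matrix.SpecialLinearGroup

lemma eq_Dlow_iff {M : SL2} {u : ℂˣ} {v : ℂ} :
    M = Dlow u v ↔ M 0 0 = u ∧ M 0 1 = 0 ∧ M 1 0 = v := by
  constructor
  · rintro rfl
    simp [Dlow]
  · rintro ⟨h00, h01, h10⟩
    have h11 : M 1 1 = (u : ℂ)⁻¹ := h00 ▸ eq_inv_of_mul_eq_one_right (apply_zero_zero_mul_apply_one_one_of_apply_zero_one h01)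
    ext i j
    fin_cases i <;> fin_cases j <;> simp [Dlow, h00, h01, h10, h11]

lemma eq_DlowT_iff {M : SL2} {u : ℂˣ} {v : ℂ} :
    M = DlowT u v ↔ M 0 0 = u ∧ M 1 0 = 0 ∧ M 0 1 = v := by
  constructor
  · rintro rfl
    simp [DlowT, Dlow]
  · rintro ⟨h00, h10, h01⟩
    have h11 : M 1 1 = (u : ℂ)⁻¹ := h00 ▸ eq_inv_of_mul_eq_one_right (apply_zero_zero_mul_apply_one_one_of_apply_one_zero h10)
    ext i j
    fin_cases i <;> fin_cases j <;> simp [DlowT, Dlow, h00, h01, h10, h11]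

lemma act_e1100_eq_self_iff (g : G4) :
    act g (e 1 1 0 0) = e 1 1 0 0 ↔
      g.1 1 1 * g.2.1 1 1 * g.2.2.1 0 0 * g.2.2.2 0 0 = 1 ∧
        g.1 0 1 = 0 ∧ g.2.1 0 1 = 0 ∧ g.2.2.1 1 0 = 0 ∧ g.2.2.2 1 0 = 0 := by
  rw [act_e, tensor4_eq_e_iff]
  simp [Fin.forall_fin_two]

lemma exists_eq_Dlow_DlowT_iff (g : G4) :
    (∃ (a' b' c' d' : ℂ) (b c d : ℂˣ),
        g = (Dlow (b⁻¹ * c * d) a', Dlow b b', DlowT c c', DlowT d d')) ↔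
      g.1 1 1 * g.2.1 1 1 * g.2.2.1 0 0 * g.2.2.2 0 0 = 1 ∧
        g.1 0 1 = 0 ∧ g.2.1 0 1 = 0 ∧ g.2.2.1 1 0 = 0 ∧ g.2.2.2 1 0 = 0 := by
  obtain ⟨A, B, C, D⟩ := g
  simp only [Prod.mk.injEq, eq_Dlow_iff, eq_DlowT_iff]
  constructor
  · rintro ⟨-, -, -, -, b, c, d, ⟨hA00, hA01, -⟩, ⟨hB00, hB01, -⟩, ⟨hC00, hC10, -⟩,
      ⟨hD00, hD10, -⟩⟩
    refine ⟨?_, hA01, hB01, hC10, hD10⟩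
    have hA := apply_zero_zero_mul_apply_one_one_of_apply_zero_one hA01
    have hB11 : B 1 1 = (b : ℂ)⁻¹ :=
      hB00 ▸ eq_inv_of_mul_eq_one_right (apply_zero_zero_mul_apply_one_one_of_apply_zero_one hB01)
    rw [Units.val_mul, Units.val_mul, Units.val_inv_eq_inv_val] at hA00
    rw [hA00] at hA
    rw [hB11, hC00, hD00]
    linear_combination hA
  · rintro ⟨hone, hA01, hB01, hC10, hD10⟩
    have hA := apply_zero_zero_mul_apply_one_one_of_apply_zero_one hA01
    refine ⟨_, _, _, _,
      .mkOfMulEqOne _ _ (apply_zero_zero_mul_apply_one_one_of_apply_zero_one hB01),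
      .mkOfMulEqOne _ _ (apply_zero_zero_mul_apply_one_one_of_apply_one_zero hC10),
      .mkOfMulEqOne _ _ (apply_zero_zero_mul_apply_one_one_of_apply_one_zero hD10),
      ⟨?_, hA01, rfl⟩, ⟨rfl, hB01, rfl⟩, ⟨rfl, hC10, rfl⟩, ⟨rfl, hD10, rfl⟩⟩
    change A 0 0 = B 1 1 * C 0 0 * D 0 0
    linear_combination B 1 1 * C 0 0 * D 0 0 * hA - A 0 0 * hone

/-- The stabiliser of `e₁₁₀₀` in `SL(2,ℂ)⁴` equals
`{(D(b⁻¹cd, a'), D(b, b'), D(c, c')ᵀ, D(d, d')ᵀ) : a',b',c',d' ∈ ℂ, b,c,d ∈ ℂˣ}`. -/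
theorem stabiliser_nilpotent_e1100 :
    {g : G4 | act g (e 1 1 0 0) = e 1 1 0 0} =
      {g : G4 | ∃ (a' b' c' d' : ℂ) (b c d : ℂˣ),
        g = (Dlow (b⁻¹ * c * d) a', Dlow b b', DlowT c c', DlowT d d')} := by
  ext g
  exact (act_e1100_eq_self_iff g).trans (exists_eq_Dlow_DlowT_iff g).symm
end
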